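/- arXiv:0908.2078 — 3 statements merged into one kernel-verified Lean document; each statement's English description precedes it below -/
import Mathlib

section
/- For every complex square matrix A of dimension n, there exists a QR decomposition A = QR with Q unitary and R upper triangular such that: (i) for every j, all entries R_{ij} with i > ρ_j vanish, where ρ_j is the rank of the first j columns of A; and (ii) the first nonzero element of each row of R is real and positive. -/
/-!
Run Gram–Schmidt on the columns `a_j` of `A`. The indices `p` with `gramSchmidt a p ≠ 0`
(the pivots) are exactly those where the rank of the leading columns jumps, so `ρ_j` is the
number of pivots `≤ j`. Complete the normalized pivot vectors to an orthonormal basis, list the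
pivot vectors first and in increasing order, and let `Q` have these columns and `R = Q† A`.
Row `k < r` of `R` then vanishes left of the `k`-th pivot `p` and has the positive entry
`‖gramSchmidt a p‖` at `p`, while the rows `≥ r` vanish because the remaining basis vectors are
orthogonal to every column.
-/

open Matrix

/-- The rank of the matrix formed by the first `j` columns of `A`. -/
noncomputable def colRank (n : ℕ) (A : Matrix (Fin n) (Fin n) ℂ) (j : ℕ) : ℕ :=
  Module.finrank ℂ (Submodule.span ℂ ((fun l => Aᵀ l) '' {l : Fin n | (l : ℕ) < j}))

open Finset Module Submodule InnerProductSpace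

theorem Finset.lt_card_filter_le_of_orderEmbOfFin_le {α : Type*} [LinearOrder α]
    (s : Finset α) {k : ℕ} (h : #s = k) {i : Fin k} {a : α} (hia : s.orderEmbOfFin h i ≤ a) :
    (i : ℕ) < #{x ∈ s | x ≤ a} :=
  calc (i : ℕ) < #((Iic i).map (s.orderEmbOfFin h).toEmbedding) := by simp
    _ ≤ #{x ∈ s | x ≤ a} := card_le_card <| by
      simp only [subset_iff, mem_map, mem_Iic, mem_filter]
      rintro _ ⟨i', hi', rfl⟩
      exact ⟨s.orderEmbOfFin_mem h i', ((s.orderEmbOfFin h).monotone hi').trans hia⟩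

theorem Finset.exists_perm_orderEmbOfFin {n : ℕ} (s : Finset (Fin n)) :
    ∃ σ : Equiv.Perm (Fin n),
      (∀ (i : Fin n) (hi : (i : ℕ) < #s), σ i = s.orderEmbOfFin rfl ⟨i, hi⟩) ∧
      ∀ i : Fin n, #s ≤ i → σ i ∉ s := by
  have hcard : #s + #sᶜ = n := by rw [card_add_card_compl, Fintype.card_fin]
  refine ⟨(finCongr hcard.symm).trans (finSumFinEquiv.symm.trans (finSumEquivOfFinset rfl rfl)),
    fun i hi => ?_, fun i hi => ?_⟩
  · have : finCongr hcard.symm i = Fin.castAdd #sᶜ ⟨i, hi⟩ := rfl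
    rw [Equiv.trans_apply, Equiv.trans_apply, this, finSumFinEquiv_symm_apply_castAdd,
      finSumEquivOfFinset_inl]
  · have : finCongr hcard.symm i = Fin.natAdd #s ⟨i - #s, by omega⟩ := Fin.ext (by simp; omega)
    rw [Equiv.trans_apply, Equiv.trans_apply, this, finSumFinEquiv_symm_apply_natAdd,
      finSumEquivOfFinset_inr]
    exact mem_compl.1 (sᶜ.orderEmbOfFin_mem rfl _)

open scoped ComplexOrder

section GramSchmidt

variable {𝕜 E ι : Type*} [RCLike 𝕜] [NormedAddCommGroup E] [InnerProductSpace 𝕜 E]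
  [LinearOrder ι] [LocallyFiniteOrderBot ι] [WellFoundedLT ι]

theorem inner_gramSchmidt_self (v : ι → E) (p : ι) :
    ⟪gramSchmidt 𝕜 v p, v p⟫_𝕜 = (‖gramSchmidt 𝕜 v p‖ : 𝕜) ^ 2 := by
  conv_lhs => rw [gramSchmidt_def'' 𝕜 v p]
  simp only [inner_add_right, inner_sum, inner_smul_right, inner_self_eq_norm_sq_to_K]
  rw [sum_eq_zero fun i hi => by rw [gramSchmidt_orthogonal 𝕜 v (mem_Iio.1 hi).ne', mul_zero],
    add_zero]

theorem inner_gramSchmidtNormed_self (v : ι → E) (p : ι) :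
    ⟪gramSchmidtNormed 𝕜 v p, v p⟫_𝕜 = ‖gramSchmidt 𝕜 v p‖ := by
  rw [gramSchmidtNormed, inner_smul_left, inner_gramSchmidt_self, map_inv₀, RCLike.conj_ofReal,
    sq, ← mul_assoc]
  by_cases h : gramSchmidt 𝕜 v p = 0
  · simp [h]
  · rw [inv_mul_cancel₀ (by simpa using h), one_mul]

variable [Fintype ι]

variable (𝕜) in
open Classical in
noncomputable def gramSchmidtPivots (v : ι → E) : Finset ι :=
  {i | gramSchmidtNormed 𝕜 v i ≠ 0}

theorem mem_gramSchmidtPivots {v : ι → E} {i : ι} :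
    i ∈ gramSchmidtPivots 𝕜 v ↔ gramSchmidtNormed 𝕜 v i ≠ 0 := by
  simp [gramSchmidtPivots]

theorem finrank_span_image_Iic (v : ι → E) (j : ι) :
    finrank 𝕜 (span 𝕜 (v '' Set.Iic j)) = #{i ∈ gramSchmidtPivots 𝕜 v | i ≤ j} := by
  set S := {i ∈ gramSchmidtPivots 𝕜 v | i ≤ j}
  have hS : gramSchmidtNormed 𝕜 v '' S = gramSchmidtNormed 𝕜 v '' Set.Iic j \ {0} := by
    ext x
    simp only [S, coe_filter, mem_gramSchmidtPivots, Set.mem_image, Set.mem_ofPred_eq,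
      Set.mem_sdiff, Set.mem_Iic, Set.mem_singleton_iff]
    constructor
    · rintro ⟨i, ⟨hi, hij⟩, rfl⟩
      exact ⟨⟨i, hij, rfl⟩, hi⟩
    · rintro ⟨⟨i, hij, rfl⟩, hi⟩
      exact ⟨i, ⟨hi, hij⟩, rfl⟩
  have hind : LinearIndepOn 𝕜 (gramSchmidtNormed 𝕜 v) (S : Set ι) :=
    LinearIndepOn.mono (gramSchmidtNormed_orthonormal' v).linearIndependent fun i hi =>
      mem_gramSchmidtPivots.1 (mem_filter.1 hi).1
  rw [← span_gramSchmidt_Iic, ← span_gramSchmidtNormed, ← span_sdiff_singleton_zero, ← hS,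
    Set.image_eq_range, finrank_span_eq_card hind]
  simp

theorem finrank_span_image_Iic_le_card_Iic (v : ι → E) (j : ι) :
    finrank 𝕜 (span 𝕜 (v '' Set.Iic j)) ≤ #(Iic j) :=
  finrank_span_image_Iic (𝕜 := 𝕜) v j ▸ card_le_card fun _ hi => mem_Iic.2 (mem_filter.1 hi).2

variable [FiniteDimensional 𝕜 E] (h : finrank 𝕜 E = Fintype.card ι) (v : ι → E)

theorem gramSchmidtOrthonormalBasis_inner_pos {p j : ι}
    (hprev : ∀ j' < j, ⟪gramSchmidtOrthonormalBasis h v p, v j'⟫_𝕜 = 0)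
    (hne : ⟪gramSchmidtOrthonormalBasis h v p, v j⟫_𝕜 ≠ 0) :
    0 < ⟪gramSchmidtOrthonormalBasis h v p, v j⟫_𝕜 := by
  have hp : gramSchmidtNormed 𝕜 v p ≠ 0 := fun hp =>
    hne (inner_gramSchmidtOrthonormalBasis_eq_zero h hp j)
  have hdiag : ⟪gramSchmidtOrthonormalBasis h v p, v p⟫_𝕜 = ‖gramSchmidt 𝕜 v p‖ := by
    rw [gramSchmidtOrthonormalBasis_apply h hp, inner_gramSchmidtNormed_self]
  have hgp : gramSchmidt 𝕜 v p ≠ 0 := fun hgp => hp (by simp [gramSchmidtNormed, hgp])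
  obtain rfl : j = p := by
    rcases lt_trichotomy j p with hjp | rfl | hpj
    · exact absurd (gramSchmidtOrthonormalBasis_inv_triangular h v hjp) hne
    · rfl
    · exact absurd (hdiag ▸ hprev p hpj) (by simpa using hgp)
  rw [hdiag]
  exact RCLike.ofReal_pos.2 (norm_pos_iff.2 hgp)

end GramSchmidt

theorem exists_orthonormalBasis_inner_canonical {𝕜 E : Type*} [RCLike 𝕜] [NormedAddCommGroup E]
    [InnerProductSpace 𝕜 E] [FiniteDimensional 𝕜 E] {n : ℕ} (h : finrank 𝕜 E = n)
    (v : Fin n → E) :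
    ∃ b : OrthonormalBasis (Fin n) 𝕜 E,
      (∀ i j : Fin n, finrank 𝕜 (span 𝕜 (v '' Set.Iic j)) ≤ i → ⟪b i, v j⟫_𝕜 = 0) ∧
      ∀ i j : Fin n, (∀ j' < j, ⟪b i, v j'⟫_𝕜 = 0) → ⟪b i, v j⟫_𝕜 ≠ 0 → 0 < ⟪b i, v j⟫_𝕜 := by
  have h' : finrank 𝕜 E = Fintype.card (Fin n) := h.trans (Fintype.card_fin n).symm
  set P := gramSchmidtPivots 𝕜 v
  obtain ⟨σ, hσP, hσnotP⟩ := P.exists_perm_orderEmbOfFin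
  refine ⟨(gramSchmidtOrthonormalBasis h' v).reindex σ.symm, fun i j hij => ?_,
    fun i j => ?_⟩
  all_goals simp only [OrthonormalBasis.reindex_apply, Equiv.symm_symm]
  · rw [finrank_span_image_Iic] at hij
    by_cases hi : (i : ℕ) < #P
    · refine gramSchmidtOrthonormalBasis_inv_triangular h' v (lt_of_not_ge fun hσj => ?_)
      rw [hσP i hi] at hσj
      exact absurd (P.lt_card_filter_le_of_orderEmbOfFin_le rfl hσj) (not_lt.2 hij)
    · refine inner_gramSchmidtOrthonormalBasis_eq_zero h' ?_ j
      simpa [P, mem_gramSchmidtPivots] using hσnotP i (not_lt.1 hi)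
  · exact gramSchmidtOrthonormalBasis_inner_pos h' v

theorem colRank_succ_eq_finrank {n : ℕ} (A : Matrix (Fin n) (Fin n) ℂ) (j : Fin n) :
    colRank n A (j + 1) =
      finrank ℂ (span ℂ ((fun l => WithLp.toLp 2 (Aᵀ l) : Fin n → EuclideanSpace ℂ (Fin n)) ''
        Set.Iic j)) := by
  have hIic : {l : Fin n | (l : ℕ) < j + 1} = Set.Iic j :=
    Set.ext fun l => Nat.lt_succ_iff
  rw [colRank, hIic, ← (WithLp.linearEquiv 2 ℂ (Fin n → ℂ)).symm.finrank_map_eq,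
    LinearMap.map_span, ← Set.image_comp]
  rfl

/-- every complex square matrix admits a QR decomposition whose
triangular factor satisfies the canonical conditions: entries below row `ρ_j`
in column `j` vanish, and the first nonzero entry of each row is real positive. -/
theorem canonical_QR_exists (n : ℕ) (A : Matrix (Fin n) (Fin n) ℂ) :
    ∃ Q R : Matrix (Fin n) (Fin n) ℂ,
      Qᴴ * Q = 1 ∧
      (∀ i j : Fin n, j < i → R i j = 0) ∧
      A = Q * R ∧
      (∀ i j : Fin n, colRank n A ((j : ℕ) + 1) ≤ (i : ℕ) → R i j = 0) ∧
      (∀ i j : Fin n, (∀ j' : Fin n, j' < j → R i j' = 0) → R i j ≠ 0 →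
        (R i j).im = 0 ∧ 0 < (R i j).re) := by
  let v : Fin n → EuclideanSpace ℂ (Fin n) := fun l => WithLp.toLp 2 (Aᵀ l)
  obtain ⟨b, hrank, hpos⟩ := exists_orthonormalBasis_inner_canonical finrank_euclideanSpace_fin v
  set R := b.toBasis.toMatrix v
  have hR : ∀ i j, R i j = ⟪b i, v j⟫_ℂ := fun i j => b.repr_apply_apply (v j) i
  have hrank' : ∀ i j : Fin n, colRank n A (j + 1) ≤ i → R i j = 0 := fun i j hij => by
    rw [hR]
    exact hrank i j (colRank_succ_eq_finrank A j ▸ hij)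
  refine ⟨(EuclideanSpace.basisFun (Fin n) ℂ).toBasis.toMatrix b, R, by simp,
    fun i j hji => hrank' i j ?_, ?_, hrank', fun i j hprev hne => ?_⟩
  · rw [colRank_succ_eq_finrank]
    exact (finrank_span_image_Iic_le_card_Iic v j).trans (Fin.card_Iic j ▸ hji)
  · rw [← OrthonormalBasis.coe_toBasis, Basis.toMatrix_mul_toMatrix]
    ext
    rfl
  · simp only [hR] at hprev hne ⊢
    exact (RCLike.pos_iff.1 (hpos i j hprev hne)).symm
end

section
/- Define F(A) to be the canonical upper-triangular factor R of the canonical QR decomposition of A (satisfying: R_{ij}=0 for i greater than the rank of the first j columns of A, and the first nonzero entry of each row of R is real positive). Then F is a canonical form for the left-multiplication action of the unitary group U(n) on ℂ^{n×n}: (i) F(A) = UA for some unitary U, and (ii) F(A) = F(B) if and only if A = VB for some unitary V. -/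
open Matrix

/-- `R` is the canonical upper-triangular factor of `A`: `A = QR` with `Q`
unitary, entries of `R` below row `ρ_j` (the rank of the first `j` columns of
`A`) in column `j` vanish, and the first nonzero entry of each row of `R` is
real and positive. -/
def IsCanonicalFactor (n : ℕ) (A R : Matrix (Fin n) (Fin n) ℂ) : Prop :=
  (∃ Q : Matrix (Fin n) (Fin n) ℂ, Qᴴ * Q = 1 ∧ A = Q * R) ∧
  (∀ i j : Fin n, colRank n A ((j : ℕ) + 1) ≤ (i : ℕ) → R i j = 0) ∧
  (∀ i j : Fin n, (∀ j' : Fin n, j' < j → R i j' = 0) → R i j ≠ 0 →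
    (R i j).im = 0 ∧ 0 < (R i j).re)

/-!
If `A = Q * R = Q' * R'` are two canonical factorizations, then `R' = W * R` with `W = Q'ᴴ * Q`
unitary, and multiplying by `W` does not change the ranks of the leading columns. By induction on
`k` below the rank, column `k` of `W` is the `k`-th standard basis vector. At the column `c` where
the rank of the leading columns jumps from `k` to `k + 1`, `R` has a nonzero pivot in row `k` and
zeros below it, so `(W * R) i c = W i k * R k c` for `i ≥ k`. The zeros of `R'` below row `k` kill
`W i k` for `i > k`, orthogonality to the earlier columns of `W` kills it for `i < k`, and the
positivity of both pivots forces `W k k = 1`. The nonzero rows of `R` all have index below the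
rank, so `W * R = R`.
-/

open Module Submodule
open scoped ComplexOrder

theorem exists_jump_of_lt {f : ℕ → ℕ} {m k : ℕ} (h0 : f 0 = 0)
    (hstep : ∀ j < m, f (j + 1) ≤ f j + 1) (hk : k < f m) :
    ∃ j < m, f j = k ∧ f (j + 1) = k + 1 := by
  induction m with
  | zero => omega
  | succ m ih =>
    by_cases hkm : k < f m
    · obtain ⟨j, hj, hjk⟩ := ih (fun j hj => hstep j (by omega)) hkm
      exact ⟨j, by omega, hjk⟩
    · have := hstep m (by omega)
      exact ⟨m, by omega, by omega, by omega⟩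

theorem finrank_span_le_card_of_forall_eq_zero {K ι : Type*} [Field K] [Fintype ι]
    {s : Set (ι → K)} {t : Finset ι} (hs : ∀ v ∈ s, ∀ i ∉ t, v i = 0) :
    finrank K (span K s) ≤ t.card := by
  let P : Submodule K (ι → K) := Submodule.pi (↑t)ᶜ fun _ => ⊥
  have hsP : span K s ≤ P := span_le.mpr fun v hv i hi => hs v hv i hi
  let restrict : P →ₗ[K] (t → K) := (LinearMap.funLeft K K ((↑) : t → ι)).domRestrict P
  have hinj : Function.Injective restrict := by
    intro v w hvw
    ext i
    by_cases hi : i ∈ t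
    · exact congrFun hvw ⟨i, hi⟩
    · simpa using (v.2 i hi).trans (w.2 i hi).symm
  calc finrank K (span K s) ≤ finrank K P := finrank_mono hsP
    _ ≤ finrank K (t → K) := LinearMap.finrank_le_finrank_of_injective hinj
    _ = t.card := by simp

theorem Complex.eq_one_of_pos_of_star_mul_self_eq_one {z : ℂ} (hz : 0 < z)
    (h : star z * z = 1) : z = 1 := by
  obtain ⟨hre, him⟩ := Complex.pos_iff.mp hz
  have hnorm := congrArg Complex.re h
  simp only [Complex.star_def, Complex.mul_re, Complex.conj_re, Complex.conj_im, ← him,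
    Complex.one_re, neg_zero, mul_zero, sub_zero] at hnorm
  exact Complex.ext (by rw [Complex.one_re]; nlinarith) (by simp [← him])

theorem Matrix.col_eq_one_col_of_unitary {ι : Type*} [Fintype ι] [LinearOrder ι]
    {W : Matrix ι ι ℂ} (hW : Wᴴ * W = 1) {k : ι}
    (hprev : ∀ t < k, ∀ i, W i t = (1 : Matrix _ _ ℂ) i t)
    (hbelow : ∀ i, k < i → W i k = 0) (hkk : 0 < W k k) :
    ∀ i, W i k = (1 : Matrix _ _ ℂ) i k := by
  have hortho : ∀ i, (Wᴴ * W) i k = ∑ t, star (W t i) * W t k := fun i => by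
    simp [mul_apply]
  have habove : ∀ i < k, W i k = 0 := by
    intro i hi
    have := hortho i
    rw [hW, one_apply_ne hi.ne, Finset.sum_eq_single i] at this
    · simpa [hprev i hi] using this.symm
    · intro t _ hti; simp [hprev i hi, one_apply_ne hti]
    · simp
  have hoff : ∀ i ≠ k, W i k = 0 := fun i hik =>
    (lt_or_gt_of_ne hik).elim (habove i) (hbelow i)
  have hkk1 : W k k = 1 := by
    refine Complex.eq_one_of_pos_of_star_mul_self_eq_one hkk ?_
    have := hortho k
    rwa [hW, one_apply_eq, eq_comm,
      Finset.sum_eq_single k (fun t _ htk => by simp [hoff t htk]) (by simp)] at this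
  intro i
  by_cases hik : i = k
  · subst hik; simp [hkk1]
  · rw [hoff i hik, one_apply_ne hik]

section Unitary

variable {m α : Type*} [Fintype m] [DecidableEq m] [CommRing α] [StarRing α]

theorem Matrix.conjTranspose_mul_self_mul_eq_one {U V : Matrix m m α} (hU : Uᴴ * U = 1)
    (hV : Vᴴ * V = 1) : (U * V)ᴴ * (U * V) = 1 :=
  mem_unitaryGroup_iff'.mp <| mul_mem (mem_unitaryGroup_iff'.mpr hU) (mem_unitaryGroup_iff'.mpr hV)

theorem Matrix.conjTranspose_conjTranspose_mul_self_eq_one {U : Matrix m m α}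
    (hU : Uᴴ * U = 1) : Uᴴᴴ * Uᴴ = 1 := by
  rw [conjTranspose_conjTranspose]
  exact mul_eq_one_comm.mp hU

theorem Matrix.eq_conjTranspose_mul_of_eq_mul {A Q R : Matrix m m α} (hQ : Qᴴ * Q = 1)
    (hA : A = Q * R) : R = Qᴴ * A := by
  rw [hA, ← mul_assoc, hQ, one_mul]

end Unitary

section ColRank

variable {n : ℕ}

theorem colRank_mul_le (Q A : Matrix (Fin n) (Fin n) ℂ) (j : ℕ) :
    colRank n (Q * A) j ≤ colRank n A j := by
  have hcols : (fun l => (Q * A)ᵀ l) '' {l : Fin n | (l : ℕ) < j}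
      = Q.mulVecLin '' ((fun l => Aᵀ l) '' {l : Fin n | (l : ℕ) < j}) := by
    rw [Set.image_image]; rfl
  unfold colRank
  rw [hcols, ← map_span]
  exact finrank_map_le _ _

theorem colRank_mul_of_mul_eq_one {P Q : Matrix (Fin n) (Fin n) ℂ} (hPQ : P * Q = 1)
    (A : Matrix (Fin n) (Fin n) ℂ) (j : ℕ) : colRank n (Q * A) j = colRank n A j := by
  refine (colRank_mul_le Q A j).antisymm ?_
  calc colRank n A j = colRank n (P * (Q * A)) j := by
        rw [← mul_assoc, hPQ, one_mul]
    _ ≤ colRank n (Q * A) j := colRank_mul_le P _ j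

theorem colRank_zero (A : Matrix (Fin n) (Fin n) ℂ) : colRank n A 0 = 0 := by
  simp [colRank]

theorem colRank_mono (A : Matrix (Fin n) (Fin n) ℂ) : Monotone (colRank n A) :=
  fun _ _ hjj' => finrank_mono <| span_mono <| Set.image_mono fun _ hl => lt_of_lt_of_le hl hjj'

theorem colRank_succ_le (A : Matrix (Fin n) (Fin n) ℂ) (c : Fin n) :
    colRank n A (c + 1) ≤ colRank n A c + 1 := by
  have hcols : {l : Fin n | (l : ℕ) < c + 1} = insert c {l : Fin n | (l : ℕ) < c} := by
    ext l; simp [Fin.ext_iff]; omega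
  unfold colRank
  rw [hcols, Set.image_insert_eq, span_insert]
  refine (finrank_add_le_finrank_add_finrank _ _).trans ?_
  rw [add_comm]
  gcongr
  simpa using finrank_span_le_card ({Aᵀ c} : Set (Fin n → ℂ))

end ColRank

section Echelon

variable {n : ℕ}

-- `0 < z` is in `ComplexOrder`: `z` is real and positive.
def IsCanonicalEchelon (n : ℕ) (R : Matrix (Fin n) (Fin n) ℂ) : Prop :=
  (∀ i j : Fin n, colRank n R (j + 1) ≤ i → R i j = 0) ∧
  ∀ i j : Fin n, (∀ j' < j, R i j' = 0) → R i j ≠ 0 → 0 < R i j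

theorem ne_zero_of_colRank_jump {R : Matrix (Fin n) (Fin n) ℂ}
    (hR : ∀ i j : Fin n, colRank n R (j + 1) ≤ i → R i j = 0) {k c : Fin n}
    (hc : colRank n R c = k) (hc1 : colRank n R (c + 1) = k + 1) : R k c ≠ 0 := by
  -- otherwise the first `c + 1` columns are supported on the first `k` rows
  intro hkc
  have hvanish : ∀ v ∈ (fun l => Rᵀ l) '' {l : Fin n | (l : ℕ) < c + 1},
      ∀ i ∉ Finset.Iio k, v i = 0 := by
    rintro _ ⟨l, hl, rfl⟩ i hi
    simp only [Set.mem_ofPred_eq, Finset.mem_Iio, not_lt] at hl hi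
    rcases (Nat.lt_succ_iff.mp hl).lt_or_eq with hlc | hlc
    · exact hR i l ((colRank_mono R hlc).trans (hc.trans_le hi))
    · obtain rfl : l = c := Fin.ext hlc
      rcases hi.lt_or_eq with hki | rfl
      · exact hR i l (hc1.trans_le hki)
      · exact hkc
  have := finrank_span_le_card_of_forall_eq_zero hvanish
  rw [Fin.card_Iio] at this
  exact absurd (hc1.symm.trans_le this) (by omega)

theorem IsCanonicalEchelon.pos_of_colRank_jump {R : Matrix (Fin n) (Fin n) ℂ}
    (hR : IsCanonicalEchelon n R) {k c : Fin n}
    (hc : colRank n R c = k) (hc1 : colRank n R (c + 1) = k + 1) : 0 < R k c :=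
  hR.2 k c (fun j hj => hR.1 k j ((colRank_mono R hj).trans hc.le))
    (ne_zero_of_colRank_jump hR.1 hc hc1)

theorem IsCanonicalEchelon.col_eq_one_col {R W : Matrix (Fin n) (Fin n) ℂ}
    (hR : IsCanonicalEchelon n R) (hWR : IsCanonicalEchelon n (W * R)) (hW : Wᴴ * W = 1)
    (k : Fin n) (hk : (k : ℕ) < colRank n R n) : ∀ i, W i k = (1 : Matrix _ _ ℂ) i k := by
  have hrank : ∀ j, colRank n (W * R) j = colRank n R j :=
    colRank_mul_of_mul_eq_one hW R
  induction k using WellFoundedLT.induction with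
  | ind k ih =>
  obtain ⟨j, hjn, hc, hc1⟩ := exists_jump_of_lt (colRank_zero R)
    (fun j hj => colRank_succ_le R ⟨j, hj⟩) hk
  set c : Fin n := ⟨j, hjn⟩
  have hWRc : ∀ i, k ≤ i → (W * R) i c = W i k * R k c := by
    intro i hki
    rw [mul_apply]
    refine Finset.sum_eq_single k (fun t _ htk => ?_) (by simp)
    rcases lt_or_gt_of_ne htk with htk | htk
    · rw [ih t htk (by omega) i, one_apply_ne (htk.trans_le hki).ne', zero_mul]
    · rw [hR.1 t c (hc1.trans_le htk), mul_zero]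
  have hpos : 0 < R k c := hR.pos_of_colRank_jump hc hc1
  have hpos' : 0 < W k k * R k c := by
    rw [← hWRc k le_rfl]
    exact hWR.pos_of_colRank_jump ((hrank c).trans hc) ((hrank (c + 1)).trans hc1)
  refine col_eq_one_col_of_unitary hW (fun t ht => ih t ht (by omega))
    (fun i hki => ?_) ?_
  · have hzero := hWR.1 i c ((hrank (c + 1)).trans_le (hc1.trans_le hki))
    rw [hWRc i hki.le] at hzero
    exact (mul_eq_zero.mp hzero).resolve_right hpos.ne'
  · simpa [hpos.ne'] using div_pos hpos' hpos

theorem IsCanonicalEchelon.mul_eq_self {R W : Matrix (Fin n) (Fin n) ℂ}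
    (hR : IsCanonicalEchelon n R) (hWR : IsCanonicalEchelon n (W * R)) (hW : Wᴴ * W = 1) :
    W * R = R := by
  ext i j
  conv_rhs => rw [← one_mul R]
  simp only [mul_apply]
  refine Finset.sum_congr rfl fun t _ => ?_
  by_cases htj : R t j = 0
  · simp [htj]
  · have ht : (t : ℕ) < colRank n R (j + 1) := by
      by_contra h
      exact htj (hR.1 t j (not_lt.mp h))
    rw [hR.col_eq_one_col hWR hW t (ht.trans_le (colRank_mono R (by omega))) i]

end Echelon

section CanonicalFactor

variable {n : ℕ} {A R : Matrix (Fin n) (Fin n) ℂ}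

theorem IsCanonicalFactor.isCanonicalEchelon (h : IsCanonicalFactor n A R) :
    IsCanonicalEchelon n R := by
  obtain ⟨⟨Q, hQ, rfl⟩, hzero, hlead⟩ := h
  refine ⟨fun i j hij => hzero i j ?_, fun i j hj hij => ?_⟩
  · rwa [colRank_mul_of_mul_eq_one hQ]
  · obtain ⟨him, hre⟩ := hlead i j hj hij
    exact Complex.pos_iff.mpr ⟨hre, him.symm⟩

theorem IsCanonicalFactor.unitary_mul (h : IsCanonicalFactor n A R)
    {V : Matrix (Fin n) (Fin n) ℂ} (hV : Vᴴ * V = 1) : IsCanonicalFactor n (V * A) R := by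
  obtain ⟨⟨Q, hQ, hA⟩, hzero, hlead⟩ := h
  refine ⟨⟨V * Q, conjTranspose_mul_self_mul_eq_one hV hQ, by rw [hA, mul_assoc]⟩, ?_,
    hlead⟩
  simpa only [colRank_mul_of_mul_eq_one hV] using hzero

theorem IsCanonicalFactor.unique {R' : Matrix (Fin n) (Fin n) ℂ}
    (h : IsCanonicalFactor n A R) (h' : IsCanonicalFactor n A R') : R = R' := by
  obtain ⟨Q, hQ, hA⟩ := h.1
  obtain ⟨Q', hQ', hA'⟩ := h'.1
  have hR' : R' = (Q'ᴴ * Q) * R := by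
    rw [mul_assoc, ← hA, eq_conjTranspose_mul_of_eq_mul hQ' hA']
  have hW : (Q'ᴴ * Q)ᴴ * (Q'ᴴ * Q) = 1 :=
    conjTranspose_mul_self_mul_eq_one (conjTranspose_conjTranspose_mul_self_eq_one hQ') hQ
  have hWR := h'.isCanonicalEchelon
  rw [hR'] at hWR ⊢
  exact (h.isCanonicalEchelon.mul_eq_self hWR hW).symm

end CanonicalFactor

/-- the map `F` assigning to each matrix its canonical
upper-triangular QR factor is a canonical form for the left-multiplication
action of the unitary group on `ℂ^{n×n}`. -/
theorem canonical_factor_is_canonical_form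
    (n : ℕ) (F : Matrix (Fin n) (Fin n) ℂ → Matrix (Fin n) (Fin n) ℂ)
    (hF : ∀ A, IsCanonicalFactor n A (F A)) :
    (∀ A : Matrix (Fin n) (Fin n) ℂ,
      ∃ U : Matrix (Fin n) (Fin n) ℂ, Uᴴ * U = 1 ∧ F A = U * A) ∧
    (∀ A B : Matrix (Fin n) (Fin n) ℂ,
      F A = F B ↔ ∃ V : Matrix (Fin n) (Fin n) ℂ, Vᴴ * V = 1 ∧ A = V * B) := by
  refine ⟨fun A => ?_, fun A B => ⟨fun hAB => ?_, ?_⟩⟩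
  · obtain ⟨Q, hQ, hA⟩ := (hF A).1
    exact ⟨Qᴴ, conjTranspose_conjTranspose_mul_self_eq_one hQ,
      eq_conjTranspose_mul_of_eq_mul hQ hA⟩
  · obtain ⟨QA, hQA, hA⟩ := (hF A).1
    obtain ⟨QB, hQB, hB⟩ := (hF B).1
    refine ⟨QA * QBᴴ, conjTranspose_mul_self_mul_eq_one hQA
      (conjTranspose_conjTranspose_mul_self_eq_one hQB), ?_⟩
    rw [hA, hAB, eq_conjTranspose_mul_of_eq_mul hQB hB, mul_assoc]
  · rintro ⟨V, hV, rfl⟩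
    exact (hF (V * B)).unique ((hF B).unitary_mul hV)
end

section
/- Let {M_k} be Kraus operators of a TPCP map on H = H_S ⊕ H_R, and let R_k = F(M_k) be the canonical R-factors with blocks R_{S,k}, R_{P,k}, R_{R,k}. If R_{P,k} = 0 for all k, then for every choice of unitary controls {U_k} such that the controlled map T_c[ρ] = Σ_k U_k M_k ρ M_k† U_k† leaves the set of states supported on H_S invariant, the set of states supported on H_R is also invariant under T_c; consequently H_S cannot be made globally asymptotically stable by any such controls. -/
open Matrix Filter
open scoped ComplexOrder

/-- `A = QR` is a canonical QR decomposition. -/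
def IsCanonicalQR (n : ℕ) (A Q R : Matrix (Fin n) (Fin n) ℂ) : Prop :=
  Qᴴ * Q = 1 ∧ A = Q * R ∧
  (∀ i j : Fin n, colRank n A ((j : ℕ) + 1) ≤ (i : ℕ) → R i j = 0) ∧
  (∀ i j : Fin n, (∀ j' : Fin n, j' < j → R i j' = 0) → R i j ≠ 0 →
    (R i j).im = 0 ∧ 0 < (R i j).re)

/-!
Invariance of the states on `H_S` forces each controlled Kraus operator `N_k = U_k M_k` to map
`H_S` into itself: test it on the pure states of `H_S`. Write `N_k = V_k R_k` with `V_k = U_k Q_k`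
unitary. The echelon shape of `R_k` makes it block upper triangular, hence block diagonal once
`R_{P,k} = 0`. If the first `m` columns of `R_k` span `H_S`, then `V_k` maps `H_S` into itself, so
the unitary `V_k` is block diagonal; otherwise the echelon shape kills every later column of `R_k`.
Either way `N_k` maps `H_R` into itself, so a pure state on `H_R` keeps all its weight on `H_R`.
-/

section ColRank

variable {n : ℕ} (A : Matrix (Fin n) (Fin n) ℂ)

lemma colRank_succ_le_of_cols_eq_zero {t u : ℕ}
    (h : ∀ l : Fin n, t ≤ l → l < u → Aᵀ l = 0) :
    colRank n A (u + 1) ≤ colRank n A t + 1 := by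
  unfold colRank
  set cols := fun l : Fin n => Aᵀ l
  have hspan : Submodule.span ℂ (cols '' {l | (l : ℕ) < u + 1}) ≤
      Submodule.span ℂ (cols '' {l | (l : ℕ) < t}) ⊔
        Submodule.span ℂ (cols '' {l | (l : ℕ) = u}) := by
    rw [← Submodule.span_union, Submodule.span_le]
    rintro _ ⟨l, hl, rfl⟩
    by_cases hlt : (l : ℕ) < t
    · exact Submodule.subset_span (Or.inl ⟨l, hlt, rfl⟩)
    · by_cases hlu : (l : ℕ) < u
      · simp [cols, h l (not_lt.mp hlt) hlu]
      · have hl' : (l : ℕ) < u + 1 := hl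
        exact Submodule.subset_span (Or.inr ⟨l, show (l : ℕ) = u by omega, rfl⟩)
  have hone : Module.finrank ℂ (Submodule.span ℂ (cols '' {l | (l : ℕ) = u})) ≤ 1 := by
    refine (finrank_span_le_card _).trans (Finset.card_le_one.mpr ?_)
    simp only [Set.mem_toFinset, Set.mem_image, Set.mem_ofPred_eq]
    rintro _ ⟨l, hl, rfl⟩ _ ⟨l', hl', rfl⟩
    rw [Fin.ext (hl.trans hl'.symm)]
  exact (Submodule.finrank_mono hspan).trans
    ((Submodule.finrank_add_le_finrank_add_finrank _ _).trans (by omega))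

lemma colRank_le (t : ℕ) : colRank n A t ≤ t := by
  induction t with
  | zero => simp [colRank]
  | succ t ih =>
    have := colRank_succ_le_of_cols_eq_zero A (t := t) (u := t) (fun l h h' => by omega)
    omega

lemma colRank_mul_left {Q : Matrix (Fin n) (Fin n) ℂ} (hQ : Qᴴ * Q = 1) (t : ℕ) :
    colRank n (Q * A) t = colRank n A t := by
  have hinj : Function.Injective Q.mulVecLin :=
    Function.LeftInverse.injective (g := Qᴴ.mulVecLin) fun v => by simp [hQ]
  have hcols : (fun l => (Q * A)ᵀ l) = Q.mulVecLin ∘ fun l => Aᵀ l := by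
    funext l
    ext i
    simp [Matrix.mulVec, Matrix.mul_apply, dotProduct]
  unfold colRank
  rw [hcols, Set.image_comp, Submodule.span_image]
  exact (LinearEquiv.finrank_eq (Submodule.equivMapOfInjective _ hinj _)).symm

end ColRank

def IsRankEchelon (n : ℕ) (R : Matrix (Fin n) (Fin n) ℂ) : Prop :=
  ∀ i j : Fin n, colRank n R ((j : ℕ) + 1) ≤ (i : ℕ) → R i j = 0

lemma IsCanonicalQR.isRankEchelon {n : ℕ} {A Q R : Matrix (Fin n) (Fin n) ℂ}
    (h : IsCanonicalQR n A Q R) : IsRankEchelon n R := fun i j hij =>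
  h.2.2.1 i j (by rwa [h.2.1, colRank_mul_left _ h.1])

namespace IsRankEchelon

variable {n : ℕ} {R : Matrix (Fin n) (Fin n) ℂ}

lemma apply_eq_zero_of_lt (hR : IsRankEchelon n R) {i j : Fin n} (hij : j < i) :
    R i j = 0 :=
  hR i j ((colRank_le R _).trans (Fin.lt_def.mp hij))

lemma apply_eq_zero_of_colRank_lt {m : ℕ} (hR : IsRankEchelon n R)
    (hRP : ∀ i j : Fin n, (i : ℕ) < m → m ≤ (j : ℕ) → R i j = 0)
    (hs : colRank n R m < m) (i j : Fin n) (hj : m ≤ (j : ℕ)) : R i j = 0 := by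
  suffices h : ∀ u : ℕ, ∀ l : Fin n, m ≤ (l : ℕ) → (l : ℕ) < u → Rᵀ l = 0 from
    congrFun (h (j + 1) j hj (Nat.lt_succ_self _)) i
  intro u
  induction u with
  | zero => intro l _ hl; omega
  | succ u ih =>
    intro l hml hlu
    rcases Nat.lt_succ_iff_lt_or_eq.mp hlu with hlu | rfl
    · exact ih l hml hlu
    · have hrank := colRank_succ_le_of_cols_eq_zero R ih
      funext i
      by_cases hi : (i : ℕ) < m
      · exact hRP i l hi hml
      · exact hR i l (by omega)

lemma span_cols_eq_spanSubset {m r : ℕ} {R : Matrix (Fin (m + r)) (Fin (m + r)) ℂ}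
    (hR : IsRankEchelon (m + r) R) (hs : colRank (m + r) R m = m) :
    Submodule.span ℂ ((fun l => Rᵀ l) '' {l | (l : ℕ) < m}) =
      Pi.spanSubset ℂ {i : Fin (m + r) | (i : ℕ) < m} := by
  apply Submodule.eq_of_le_of_finrank_eq
  · rw [Submodule.span_le]
    rintro _ ⟨l, hl, rfl⟩
    refine Pi.mem_spanSubset_iff.mpr fun i hi => hR.apply_eq_zero_of_lt ?_
    simp only [Set.mem_ofPred_eq, not_lt] at hl hi
    exact Fin.lt_def.mpr (by omega)
  · change colRank (m + r) R m = _
    rw [Pi.dim_spanSubset, Set.ncard_eq_toFinset_card', hs]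
    simp [Fin.card_filter_val_lt]

end IsRankEchelon

section CoordinateSubspace

variable {ι : Type*} [Fintype ι] [DecidableEq ι] {s : Set ι} {V R : Matrix ι ι ℂ}

lemma conjTranspose_mul_self_mul_left (hV : Vᴴ * V = 1) (A : Matrix ι ι ℂ) :
    (V * A)ᴴ * (V * A) = Aᴴ * A := by
  rw [conjTranspose_mul, Matrix.mul_assoc, ← Matrix.mul_assoc Vᴴ, hV, Matrix.one_mul]

lemma apply_eq_zero_of_mul_apply_eq_zero
    (hspan : Submodule.span ℂ ((fun l => Rᵀ l) '' s) = Pi.spanSubset ℂ s)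
    (hVR : ∀ i j, i ∉ s → j ∈ s → (V * R) i j = 0) {i j : ι} (hi : i ∉ s)
    (hj : j ∈ s) : V i j = 0 := by
  have hmap : (Pi.spanSubset ℂ s).map V.mulVecLin ≤ Pi.spanSubset ℂ s := by
    rw [← hspan, Submodule.map_span_le, hspan]
    rintro _ ⟨l, hl, rfl⟩
    refine Pi.mem_spanSubset_iff.mpr fun i hi => ?_
    rw [Matrix.mulVecLin_apply, ← hVR i l hi hl, Matrix.mul_apply]
    rfl
  have hsingle : Pi.single j (1 : ℂ) ∈ Pi.spanSubset ℂ s :=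
    Pi.mem_spanSubset_iff.mpr fun i hi => Pi.single_eq_of_ne (by rintro rfl; exact hi hj) 1
  have h := Pi.mem_spanSubset_iff.mp (hmap (Submodule.mem_map_of_mem hsingle)) i hi
  rwa [Matrix.mulVecLin_apply, Matrix.mulVec_single_one] at h

lemma apply_eq_zero_of_conjTranspose_mul_self_eq_one (hV : Vᴴ * V = 1)
    (hVQ : ∀ i j, i ∉ s → j ∈ s → V i j = 0) {i j : ι} (hi : i ∈ s) (hj : j ∉ s) :
    V i j = 0 := by
  -- block indices live in `Prop`, ordered by `False < True`
  have hlt {a b : ι} : (a ∉ s) < (b ∉ s) ↔ a ∈ s ∧ b ∉ s := by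
    rw [lt_iff_le_not_ge]; simp only [le_Prop_eq]; tauto
  have hV' : V.BlockTriangular (· ∉ s) := fun i j hij => hVQ i j (hlt.mp hij).2 (hlt.mp hij).1
  have : Invertible V := invertibleOfLeftInverse _ _ hV
  have h := blockTriangular_inv_of_blockTriangular hV' (hlt.mpr ⟨hi, hj⟩)
  rwa [inv_eq_left_inv hV, conjTranspose_apply, star_eq_zero] at h

end CoordinateSubspace

lemma IsRankEchelon.apply_eq_zero_of_eq_mul {m r : ℕ}
    {R V N : Matrix (Fin (m + r)) (Fin (m + r)) ℂ} (hR : IsRankEchelon (m + r) R)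
    (hRP : ∀ i j : Fin (m + r), (i : ℕ) < m → m ≤ (j : ℕ) → R i j = 0)
    (hV : Vᴴ * V = 1) (hN : N = V * R)
    (hNQ : ∀ i j : Fin (m + r), m ≤ (i : ℕ) → (j : ℕ) < m → N i j = 0)
    (i j : Fin (m + r)) (hi : (i : ℕ) < m) (hj : m ≤ (j : ℕ)) : N i j = 0 := by
  subst hN
  rw [Matrix.mul_apply]
  refine Finset.sum_eq_zero fun l _ => ?_
  rcases (colRank_le R m).lt_or_eq with hs | hs
  · rw [hR.apply_eq_zero_of_colRank_lt hRP hs l j hj, mul_zero]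
  · have hVQ (a b : Fin (m + r)) (ha : ¬ (a : ℕ) < m) (hb : (b : ℕ) < m) : V a b = 0 :=
      apply_eq_zero_of_mul_apply_eq_zero (hR.span_cols_eq_spanSubset hs)
        (fun a b ha hb => hNQ a b (not_lt.mp ha) hb) ha hb
    by_cases hl : (l : ℕ) < m
    · rw [hRP l j hl hj, mul_zero]
    · rw [apply_eq_zero_of_conjTranspose_mul_self_eq_one (s := {i : Fin (m + r) | (i : ℕ) < m})
        hV hVQ hi hl, zero_mul]

lemma apply_eq_zero_of_castAdd_natAdd {α : Type*} [Zero α] {m r : ℕ}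
    {A : Matrix (Fin (m + r)) (Fin (m + r)) α}
    (h : ∀ (i : Fin m) (j : Fin r), A (Fin.castAdd r i) (Fin.natAdd m j) = 0)
    (i j : Fin (m + r)) (hi : (i : ℕ) < m) (hj : m ≤ (j : ℕ)) : A i j = 0 := by
  obtain ⟨j', rfl⟩ : ∃ j' : Fin r, Fin.natAdd m j' = j :=
    ⟨⟨j - m, by omega⟩, Fin.ext (by simp; omega)⟩
  exact h ⟨i, hi⟩ j'

section PureState

variable {n : Type*} [DecidableEq n]

lemma posSemidef_diagonal_single (b : n) : (diagonal (Pi.single b (1 : ℂ))).PosSemidef :=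
  posSemidef_diagonal_iff.mpr fun i => by by_cases h : i = b <;> simp [h]

lemma diagonal_single_apply_eq_zero {α : Type*} [Zero α] [One α] {p : n → Prop} {b : n}
    (hb : ¬ p b) (i j : n) (hij : p i ∨ p j) : diagonal (Pi.single b (1 : α)) i j = 0 := by
  obtain rfl | hne := eq_or_ne i j
  · have hib : i ≠ b := by rintro rfl; exact hb (hij.elim id id)
    simp [hib]
  · exact diagonal_apply_ne _ hne

lemma trace_diagonal_ite_mul [Fintype n] {α : Type*} [Semiring α] (p : n → Prop)
    [DecidablePred p] {X : Matrix n n α} (hX : ∀ i, ¬ p i → X i i = 0) :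
    (diagonal (fun i => if p i then 1 else 0) * X).trace = X.trace := by
  simp only [trace, diag, diagonal_mul]
  refine Finset.sum_congr rfl fun i _ => ?_
  split_ifs with h
  · exact one_mul _
  · rw [hX i h, zero_mul]

end PureState

section KrausMap

variable {ι n : Type*} [Fintype ι] [Fintype n] (N : ι → Matrix n n ℂ)

noncomputable def krausMap (ρ : Matrix n n ℂ) : Matrix n n ℂ :=
  ∑ k, N k * ρ * (N k)ᴴ

lemma trace_krausMap [DecidableEq n] (hN : ∑ k, (N k)ᴴ * N k = 1) (ρ : Matrix n n ℂ) :
    (krausMap N ρ).trace = ρ.trace := by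
  calc (krausMap N ρ).trace = ∑ k, ((N k)ᴴ * N k * ρ).trace := by
        simp only [krausMap, trace_sum, trace_mul_cycle _ ρ]
    _ = ((∑ k, (N k)ᴴ * N k) * ρ).trace := by rw [Finset.sum_mul, trace_sum]
    _ = ρ.trace := by rw [hN, one_mul]

lemma trace_krausMap_iterate [DecidableEq n] (hN : ∑ k, (N k)ᴴ * N k = 1) (ρ : Matrix n n ℂ)
    (t : ℕ) : ((krausMap N)^[t] ρ).trace = ρ.trace :=
  Function.Iterate.rec (fun σ => σ.trace = ρ.trace) rfl
    (fun σ hσ => (trace_krausMap N hN σ).trans hσ) t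

lemma krausMap_diagonal_single_apply_self_eq_zero_iff [DecidableEq n] (a b : n) :
    krausMap N (diagonal (Pi.single b 1)) a a = 0 ↔ ∀ k, N k a b = 0 := by
  have h : krausMap N (diagonal (Pi.single b 1)) a a =
      ∑ k, ((Complex.normSq (N k a b) : ℝ) : ℂ) := by
    simp only [krausMap, Matrix.sum_apply]
    refine Finset.sum_congr rfl fun k _ => ?_
    rw [Matrix.mul_apply]
    simp [Matrix.mul_diagonal, Pi.single_apply, Complex.mul_conj]
  rw [h]
  norm_cast
  simp [Finset.sum_eq_zero_iff_of_nonneg fun k _ => Complex.normSq_nonneg _]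

variable (p : n → Prop)

lemma krausMap_apply_eq_zero (hN : ∀ k i c, p i → ¬ p c → N k i c = 0)
    (ρ : Matrix n n ℂ) (hρ : ∀ i j, p i ∨ p j → ρ i j = 0) (i j : n)
    (hij : p i ∨ p j) : krausMap N ρ i j = 0 := by
  simp only [krausMap, Matrix.sum_apply, Matrix.mul_apply, Finset.sum_mul]
  refine Finset.sum_eq_zero fun k _ =>
    Finset.sum_eq_zero fun d _ => Finset.sum_eq_zero fun c _ => ?_
  rcases hij with hi | hj
  · by_cases hc : p c
    · rw [hρ c d (Or.inl hc), mul_zero, zero_mul]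
    · rw [hN k i c hi hc, zero_mul, zero_mul]
  · by_cases hd : p d
    · rw [hρ c d (Or.inr hd), mul_zero, zero_mul]
    · rw [conjTranspose_apply, hN k j d hj hd, star_zero, mul_zero]

lemma krausMap_iterate_apply_eq_zero (hN : ∀ k i c, p i → ¬ p c → N k i c = 0)
    (ρ : Matrix n n ℂ) (hρ : ∀ i j, p i ∨ p j → ρ i j = 0) (t : ℕ) :
    ∀ i j, p i ∨ p j → (krausMap N)^[t] ρ i j = 0 :=
  Function.Iterate.rec _ hρ (krausMap_apply_eq_zero N p hN) t

lemma apply_eq_zero_of_krausMap_apply_eq_zero [DecidableEq n]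
    (hT : ∀ ρ : Matrix n n ℂ, ρ.PosSemidef → ρ.trace = 1 →
      (∀ i j, p i ∨ p j → ρ i j = 0) → ∀ i j, p i ∨ p j → krausMap N ρ i j = 0)
    (k : ι) {i c : n} (hi : p i) (hc : ¬ p c) : N k i c = 0 :=
  (krausMap_diagonal_single_apply_self_eq_zero_iff N i c).mp
    (hT _ (posSemidef_diagonal_single c) (by simp) (diagonal_single_apply_eq_zero hc) i i
      (Or.inl hi)) k

end KrausMap

/-- if all the `R_{P,k}` blocks of the canonical factors vanish,
then any unitary control choice making the states supported on `H_S` invariant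
also makes the states supported on `H_R` invariant, so `H_S` cannot be made
globally asymptotically stable. -/
theorem vanishing_RP_precludes_stabilization
    (m r K : ℕ) (hr : 0 < r)
    (M Q R : Fin K → Matrix (Fin (m + r)) (Fin (m + r)) ℂ)
    (hTP : ∑ k, (M k)ᴴ * M k = 1)
    (hQR : ∀ k, IsCanonicalQR (m + r) (M k) (Q k) (R k))
    (hRP : ∀ k, ∀ (i : Fin m) (j : Fin r),
        R k (Fin.castAdd r i) (Fin.natAdd m j) = 0) :
    ∀ U : Fin K → Matrix (Fin (m + r)) (Fin (m + r)) ℂ,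
      (∀ k, (U k)ᴴ * U k = 1) →
      (∀ ρ : Matrix (Fin (m + r)) (Fin (m + r)) ℂ,
        ρ.PosSemidef → ρ.trace = 1 →
        (∀ i j : Fin (m + r), m ≤ (i : ℕ) ∨ m ≤ (j : ℕ) → ρ i j = 0) →
        (∀ i j : Fin (m + r), m ≤ (i : ℕ) ∨ m ≤ (j : ℕ) →
          (∑ k, U k * M k * ρ * (M k)ᴴ * (U k)ᴴ) i j = 0)) →
      ((∀ ρ : Matrix (Fin (m + r)) (Fin (m + r)) ℂ,
          ρ.PosSemidef → ρ.trace = 1 →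
          (∀ i j : Fin (m + r), (i : ℕ) < m ∨ (j : ℕ) < m → ρ i j = 0) →
          (∀ i j : Fin (m + r), (i : ℕ) < m ∨ (j : ℕ) < m →
            (∑ k, U k * M k * ρ * (M k)ᴴ * (U k)ᴴ) i j = 0)) ∧
        ¬ (∀ ρ : Matrix (Fin (m + r)) (Fin (m + r)) ℂ,
            ρ.PosSemidef → ρ.trace = 1 →
            Tendsto
              (fun t : ℕ =>
                (Matrix.diagonal (fun i : Fin (m + r) => if m ≤ (i : ℕ) then (1 : ℂ) else 0) *
                  ((fun σ => ∑ k, U k * M k * σ * (M k)ᴴ * (U k)ᴴ)^[t] ρ)).trace)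
              atTop (nhds 0))) := by
  intro U hU hS
  have hT (σ : Matrix (Fin (m + r)) (Fin (m + r)) ℂ) :
      ∑ k, U k * M k * σ * (M k)ᴴ * (U k)ᴴ = krausMap (fun k => U k * M k) σ := by
    simp only [krausMap, conjTranspose_mul, Matrix.mul_assoc]
  simp only [hT] at hS ⊢
  have hTPc : ∑ k, (U k * M k)ᴴ * (U k * M k) = 1 := by
    rw [← hTP]
    exact Finset.sum_congr rfl fun k _ => conjTranspose_mul_self_mul_left (hU k) (M k)
  have hR (k : Fin K) (i c : Fin (m + r)) (hi : (i : ℕ) < m) (hc : ¬ (c : ℕ) < m) :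
      (U k * M k) i c = 0 :=
    (hQR k).isRankEchelon.apply_eq_zero_of_eq_mul (V := U k * Q k)
      (apply_eq_zero_of_castAdd_natAdd (hRP k))
      (by rw [conjTranspose_mul_self_mul_left (hU k), (hQR k).1])
      (by rw [Matrix.mul_assoc, ← (hQR k).2.1])
      (fun i j hi hj => apply_eq_zero_of_krausMap_apply_eq_zero _ _ hS k hi (not_le.mpr hj))
      i c hi (not_lt.mp hc)
  refine ⟨fun ρ _ _ => krausMap_apply_eq_zero _ _ hR ρ, fun hGAS => ?_⟩
  let b : Fin (m + r) := ⟨m, Nat.lt_add_of_pos_right hr⟩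
  have hconst (t : ℕ) :
      (diagonal (fun i : Fin (m + r) => if m ≤ (i : ℕ) then (1 : ℂ) else 0) *
        (krausMap (fun k => U k * M k))^[t] (diagonal (Pi.single b 1))).trace = 1 := by
    rw [trace_diagonal_ite_mul _ fun i hi => krausMap_iterate_apply_eq_zero _ _ hR _
      (diagonal_single_apply_eq_zero (lt_irrefl m)) t i i (Or.inl (not_le.mp hi)),
      trace_krausMap_iterate _ hTPc]
    simp
  have hlim := hGAS _ (posSemidef_diagonal_single b) (by simp)
  simp only [hconst] at hlim
  exact one_ne_zero (tendsto_nhds_unique tendsto_const_nhds hlim)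
end
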